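/- arXiv:2006.00462 — 4 statements merged into one kernel-verified Lean document; each statement's English description precedes it below -/
import Mathlib

section
/- Let X be a normed space, let φ : X → (-∞,∞] with x̄ ∈ dom φ, and let ψ : X → (-∞,∞] be a proper function such that ψ(u) ≤ dφ(x̄)(u) for all u ∈ X. Then φ is properly epi-differentiable at x̄ with ψ(·) = dφ(x̄)(·) if and only if for every u ∈ X there exists a map ũ : [0,ε] → X (not necessarily continuous) with lim_{t↓0} ũ(t) = ũ(0) = u and ψ(u) = lim_{t↓0} (φ(x̄ + t·ũ(t)) − φ(x̄))/t (as a limit in the extended reals). -/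
/-!
Since the outer limit of the epigraphs of `Δₜφ(x̄)` always lies in `epi dφ(x̄)` (the subderivative
is a liminf) and the inner limit lies in the outer one, epi-differentiability reduces to the single
inclusion `epi dφ(x̄) ⊆ Liminf_{t↓0} epi Δₜφ(x̄)`. In a metric space, a point belongs to a
sequential inner limit iff it is the limit of a selection `t ↦ w(t) ∈ Sₜ` as `t ↓ 0`: choose `w(t)`
within `t` of the distance from the point to `Sₜ`, which tends to `0`.

Applied to `(u, dφ(x̄)(u))`, such a selection gives the path `ũ`, along which `Δₜφ(x̄)` has liminf
at least `dφ(x̄)(u)` and limsup at most the heights, which tend to `dφ(x̄)(u)`. Conversely, a path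
along which `Δₜφ(x̄)` tends to `ψ(u)` forces `dφ(x̄)(u) ≤ ψ(u)`, and pairing it with heights above
`Δₜφ(x̄)(ũ(t))` tending to any `r ≥ ψ(u)` gives a selection for `(u, r)`.
-/

open Filter Topology Set Metric Pointwise

noncomputable section

variable {E : Type*} [NormedAddCommGroup E] [NormedSpace ℝ E]

/-- Bouligand–Severi contingent tangent cone. -/
def contTangent (Ω : Set E) (x : E) : Set E :=
  {u | ∃ t : ℕ → ℝ, ∃ v : ℕ → E,
    (∀ k, 0 < t k) ∧ Tendsto t atTop (𝓝 0) ∧ Tendsto v atTop (𝓝 u) ∧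
    ∀ k, x + t k • v k ∈ Ω}

/-- Dini–Hadamard subnormal cone. -/
def subNormal (Ω : Set E) (x : E) : Set (E →L[ℝ] ℝ) :=
  {v | ∀ u ∈ contTangent Ω x, v u ≤ 0}

/-- Normal cone of convex analysis. -/
def convNormal (Θ : Set E) (y : E) : Set (E →L[ℝ] ℝ) :=
  {l | ∀ z ∈ Θ, l (z - y) ≤ 0}

/-- Difference quotient of an extended-real-valued function. -/
def diffQuot (φ : E → EReal) (x : E) (t : ℝ) (u : E) : EReal :=
  ((t⁻¹ : ℝ) : EReal) * (φ (x + t • u) - φ x)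

/-- Dini–Hadamard subderivative. -/
def subDeriv (φ : E → EReal) (x : E) (u : E) : EReal :=
  Filter.liminf (fun p : ℝ × E => diffQuot φ x p.1 p.2) ((𝓝[>] (0:ℝ)) ×ˢ 𝓝 u)

/-- Dini–Hadamard subdifferential. -/
def subDiff (φ : E → EReal) (x : E) : Set (E →L[ℝ] ℝ) :=
  {v | ∀ u, (v u : EReal) ≤ subDeriv φ x u}

/-- Proper extended-real-valued function. -/
def properFun (ψ : E → EReal) : Prop := (∀ u, ψ u ≠ ⊥) ∧ ∃ u, ψ u ≠ ⊤

def epiSet (g : E → EReal) : Set (E × ℝ) := {p | g p.1 ≤ (p.2 : EReal)}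

/-- Painlevé–Kuratowski sequential outer limit as t ↓ 0. -/
def outerLim {α : Type*} [TopologicalSpace α] (S : ℝ → Set α) : Set α :=
  {z | ∃ t : ℕ → ℝ, ∃ w : ℕ → α, (∀ k, 0 < t k) ∧ Tendsto t atTop (𝓝 0) ∧
    Tendsto w atTop (𝓝 z) ∧ ∀ k, w k ∈ S (t k)}

/-- Painlevé–Kuratowski sequential inner limit as t ↓ 0. -/
def innerLim {α : Type*} [TopologicalSpace α] (S : ℝ → Set α) : Set α :=
  {z | ∀ t : ℕ → ℝ, (∀ k, 0 < t k) → Tendsto t atTop (𝓝 0) →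
    ∃ w : ℕ → α, Tendsto w atTop (𝓝 z) ∧ ∀ᶠ k in atTop, w k ∈ S (t k)}

/-- Epi-differentiability at a point. -/
def epiDiffAt (φ : E → EReal) (x : E) : Prop :=
  outerLim (fun t => epiSet (fun u => diffQuot φ x t u)) = epiSet (subDeriv φ x) ∧
  innerLim (fun t => epiSet (fun u => diffQuot φ x t u)) = epiSet (subDeriv φ x)

/-- Relative Lipschitz continuity around x w.r.t. Ω with constant ℓ. -/
def RelLipschitzOn (φ : E → EReal) (Ω : Set E) (x : E) (ℓ : ℝ) : Prop :=
  ∃ U ∈ 𝓝 x, ∀ y ∈ Ω ∩ U, ∀ z ∈ Ω ∩ U, φ y - φ z ≤ ((ℓ * ‖y - z‖ : ℝ) : EReal)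

def RelLipschitzAround (φ : E → EReal) (Ω : Set E) (x : E) : Prop :=
  ∃ ℓ : ℝ, 0 ≤ ℓ ∧ RelLipschitzOn φ Ω x ℓ

/-- Local Lipschitz continuity of an extended-real-valued function around x (finite nearby). -/
def LocLipschitzAt (φ : E → EReal) (x : E) : Prop :=
  ∃ ℓ : ℝ, ∃ U ∈ 𝓝 x, (∀ z ∈ U, φ z ≠ ⊤) ∧
    ∀ z ∈ U, ∀ w ∈ U, φ z - φ w ≤ ((ℓ * ‖z - w‖ : ℝ) : EReal)

/-- Dini–Hadamard regularity. -/
def DHRegular (φ : E → EReal) (x : E) : Prop :=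
  ∀ u, sSup ((fun v : E →L[ℝ] ℝ => (v u : EReal)) '' subDiff φ x) = subDeriv φ x u

def weakStarClosure (S : Set (E →L[ℝ] ℝ)) : Set (E →L[ℝ] ℝ) :=
  closure (show Set (WeakDual ℝ E) from S)

def IsWeakStarClosed (S : Set (E →L[ℝ] ℝ)) : Prop :=
  IsClosed (show Set (WeakDual ℝ E) from S)

section PainleveKuratowski

variable {α : Type*}

theorem innerLim_subset_outerLim [TopologicalSpace α] (S : ℝ → Set α) :
    innerLim S ⊆ outerLim S := by
  intro z hz
  have ht : Tendsto (fun k : ℕ => 1 / ((k : ℝ) + 1)) atTop (𝓝 0) :=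
    tendsto_one_div_add_atTop_nhds_zero_nat
  obtain ⟨w, hw, hwS⟩ := hz _ (fun k => by positivity) ht
  obtain ⟨N, hN⟩ := eventually_atTop.1 hwS
  exact ⟨fun k => 1 / ((k + N : ℕ) + 1 : ℝ), fun k => w (k + N), fun k => by positivity,
    (tendsto_add_atTop_iff_nat N).2 ht, (tendsto_add_atTop_iff_nat N).2 hw,
    fun k => hN _ (Nat.le_add_left N k)⟩

theorem tendsto_infEDist_of_mem_innerLim [PseudoEMetricSpace α] {S : ℝ → Set α} {z : α}
    (hz : z ∈ innerLim S) : Tendsto (fun t => Metric.infEDist z (S t)) (𝓝[>] 0) (𝓝 0) := by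
  refine tendsto_iff_seq_tendsto.2 fun t ht => ?_
  obtain ⟨N, hN⟩ := eventually_atTop.1 (ht.eventually self_mem_nhdsWithin)
  have htN : Tendsto (fun k => t (k + N)) atTop (𝓝 0) :=
    (tendsto_add_atTop_iff_nat N).2 (tendsto_nhds_of_tendsto_nhdsWithin ht)
  obtain ⟨w, hw, hwS⟩ := hz _ (fun k => hN _ (Nat.le_add_left N k)) htN
  refine (tendsto_add_atTop_iff_nat N).1 <|
    tendsto_of_tendsto_of_tendsto_of_le_of_le' tendsto_const_nhds
      (tendsto_iff_edist_tendsto_0.1 hw) (Eventually.of_forall fun _ => zero_le) ?_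
  filter_upwards [hwS] with k hk
  rw [edist_comm]
  exact Metric.infEDist_le_edist_of_mem hk

theorem mem_innerLim_iff [PseudoEMetricSpace α] {S : ℝ → Set α} {z : α} :
    z ∈ innerLim S ↔
      ∃ w : ℝ → α, Tendsto w (𝓝[>] 0) (𝓝 z) ∧ ∀ᶠ t in 𝓝[>] 0, w t ∈ S t := by
  constructor
  · intro hz
    set e : ℝ → ENNReal := fun t => Metric.infEDist z (S t)
    have he : Tendsto e (𝓝[>] 0) (𝓝 0) := tendsto_infEDist_of_mem_innerLim hz
    have hsel : ∀ t, ∃ y, 0 < t → e t ≠ ⊤ → y ∈ S t ∧ edist y z < e t + ENNReal.ofReal t := by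
      intro t
      by_cases ht : 0 < t ∧ e t ≠ ⊤
      · obtain ⟨y, hy, hyz⟩ := Metric.infEDist_lt_iff.1
          (ENNReal.lt_add_right ht.2 (ENNReal.ofReal_pos.2 ht.1).ne')
        exact ⟨y, fun _ _ => ⟨hy, by rwa [edist_comm]⟩⟩
      · exact ⟨z, fun h1 h2 => absurd ⟨h1, h2⟩ ht⟩
    choose w hw using hsel
    have hgood : ∀ᶠ t in 𝓝[>] 0, w t ∈ S t ∧ edist (w t) z < e t + ENNReal.ofReal t := by
      filter_upwards [self_mem_nhdsWithin, he.eventually_lt_const ENNReal.zero_lt_top]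
        with t ht hte using hw t ht hte.ne
    refine ⟨w, ?_, hgood.mono fun _ h => h.1⟩
    have hbound : Tendsto (fun t => e t + ENNReal.ofReal t) (𝓝[>] 0) (𝓝 0) := by
      simpa using he.add ((ENNReal.tendsto_ofReal tendsto_id).mono_left
        (nhdsWithin_le_nhds (a := (0 : ℝ))))
    exact tendsto_iff_edist_tendsto_0.2 <|
      tendsto_of_tendsto_of_tendsto_of_le_of_le' tendsto_const_nhds hbound
        (Eventually.of_forall fun _ => zero_le) (hgood.mono fun _ h => h.2.le)
  · rintro ⟨w, hw, hwS⟩ t ht0 ht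
    have ht' : Tendsto t atTop (𝓝[>] 0) :=
      tendsto_nhdsWithin_of_tendsto_nhds_of_eventually_within _ ht (Eventually.of_forall ht0)
    exact ⟨w ∘ t, hw.comp ht', ht'.eventually hwS⟩

end PainleveKuratowski

theorem EReal.exists_real_tendsto_of_tendsto_le {ι : Type*} {l : Filter ι} {f : ι → EReal}
    {L : EReal} {r : ℝ} (hf : Tendsto f l (𝓝 L)) (hLr : L ≤ r) :
    ∃ s : ι → ℝ, Tendsto s l (𝓝 r) ∧ ∀ᶠ i in l, f i ≤ s i := by
  have hmax : Tendsto (fun i => max (f i) r) l (𝓝 r) := by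
    simpa [max_eq_right hLr] using hf.max (tendsto_const_nhds (x := (r : EReal)))
  refine ⟨fun i => (max (f i) r).toReal, by
    simpa [Function.comp_def] using (EReal.tendsto_toReal (EReal.coe_ne_top r) (EReal.coe_ne_bot r)).comp hmax, ?_⟩
  filter_upwards [hmax.eventually_lt_const (EReal.coe_lt_top r)] with i hi
  rw [EReal.coe_toReal hi.ne (ne_bot_of_le_ne_bot (EReal.coe_ne_bot r) (le_max_right _ _))]
  exact le_max_left _ _

section Subderivative

variable {φ : E → EReal} {x u : E} {ι : Type*} {l : Filter ι} {t : ι → ℝ} {v : ι → E}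

theorem subDeriv_le_liminf (h : Tendsto (fun i => (t i, v i)) l (𝓝[>] 0 ×ˢ 𝓝 u)) :
    subDeriv φ x u ≤ liminf (fun i => diffQuot φ x (t i) (v i)) l :=
  (liminf_le_liminf_of_le h).trans_eq (liminf_comp _ _ _).symm

theorem subDeriv_le_of_tendsto [l.NeBot] (h : Tendsto (fun i => (t i, v i)) l (𝓝[>] 0 ×ˢ 𝓝 u))
    {g : ι → EReal} {L : EReal} (hle : ∀ᶠ i in l, diffQuot φ x (t i) (v i) ≤ g i)
    (hg : Tendsto g l (𝓝 L)) : subDeriv φ x u ≤ L :=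
  (subDeriv_le_liminf h).trans ((liminf_le_liminf hle).trans_eq hg.liminf_eq)

theorem tendsto_diffQuot_subDeriv_of_limsup_le {w : ℝ → E} (hw : Tendsto w (𝓝[>] 0) (𝓝 u))
    (h : limsup (fun t => diffQuot φ x t (w t)) (𝓝[>] 0) ≤ subDeriv φ x u) :
    Tendsto (fun t => diffQuot φ x t (w t)) (𝓝[>] 0) (𝓝 (subDeriv φ x u)) :=
  tendsto_of_le_liminf_of_limsup_le (subDeriv_le_liminf (tendsto_id.prodMk hw)) h

theorem outerLim_epiSet_diffQuot_subset :
    outerLim (fun t => epiSet (fun u => diffQuot φ x t u)) ⊆ epiSet (subDeriv φ x) := by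
  rintro ⟨u, r⟩ ⟨t, w, ht0, ht, hw, hwS⟩
  have htw : Tendsto (fun k => (t k, (w k).1)) atTop (𝓝[>] 0 ×ˢ 𝓝 u) :=
    (tendsto_nhdsWithin_of_tendsto_nhds_of_eventually_within _ ht
      (Eventually.of_forall ht0)).prodMk hw.fst_nhds
  exact subDeriv_le_of_tendsto htw (Eventually.of_forall hwS)
    ((continuous_coe_real_ereal.tendsto _).comp hw.snd_nhds)

theorem epiDiffAt_iff :
    epiDiffAt φ x ↔
      epiSet (subDeriv φ x) ⊆ innerLim (fun t => epiSet (fun u => diffQuot φ x t u)) := by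
  refine ⟨fun h => h.2.ge, fun h => ?_⟩
  have houter := outerLim_epiSet_diffQuot_subset (φ := φ) (x := x)
  have hinner := innerLim_subset_outerLim (fun t => epiSet (fun u => diffQuot φ x t u))
  exact ⟨houter.antisymm (h.trans hinner), (hinner.trans houter).antisymm h⟩

theorem exists_path_tendsto_subDeriv (hepi : epiDiffAt φ x) (hbot : subDeriv φ x u ≠ ⊥) :
    ∃ w : ℝ → E, w 0 = u ∧ Tendsto w (𝓝[>] 0) (𝓝 u) ∧
      Tendsto (fun t => diffQuot φ x t (w t)) (𝓝[>] 0) (𝓝 (subDeriv φ x u)) := by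
  rcases eq_or_ne (subDeriv φ x u) ⊤ with htop | htop
  · exact ⟨fun _ => u, rfl, tendsto_const_nhds,
      tendsto_diffQuot_subDeriv_of_limsup_le tendsto_const_nhds (htop ▸ le_top)⟩
  set r := (subDeriv φ x u).toReal
  have hr : subDeriv φ x u = r := (EReal.coe_toReal htop hbot).symm
  obtain ⟨p, hp, hpS⟩ := mem_innerLim_iff.1 (epiDiffAt_iff.1 hepi (show (u, r) ∈ _ from hr.le))
  set w := Function.update (fun t => (p t).1) 0 u
  have hw_eq : ∀ᶠ t in 𝓝[>] (0 : ℝ), w t = (p t).1 :=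
    eventually_mem_nhdsWithin.mono fun _ ht => Function.update_of_ne (ne_of_gt ht) _ _
  refine ⟨w, Function.update_self _ _ _,
    hp.fst_nhds.congr' (hw_eq.mono fun _ h => h.symm),
    tendsto_diffQuot_subDeriv_of_limsup_le
      (hp.fst_nhds.congr' (hw_eq.mono fun _ h => h.symm)) ?_⟩
  calc limsup (fun t => diffQuot φ x t (w t)) (𝓝[>] 0)
      ≤ limsup (fun t => ((p t).2 : EReal)) (𝓝[>] 0) := by
        refine limsup_le_limsup ?_
        filter_upwards [hw_eq, hpS] with t ht htS
        rw [ht]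
        exact htS
    _ = subDeriv φ x u := by
        rw [hr]
        exact ((continuous_coe_real_ereal.tendsto _).comp hp.snd_nhds).limsup_eq

theorem mem_innerLim_epiSet_diffQuot_of_tendsto {w : ℝ → E} {r : ℝ}
    (hw : Tendsto w (𝓝[>] 0) (𝓝 u))
    (hdq : Tendsto (fun t => diffQuot φ x t (w t)) (𝓝[>] 0) (𝓝 (subDeriv φ x u)))
    (hur : (u, r) ∈ epiSet (subDeriv φ x)) :
    (u, r) ∈ innerLim (fun t => epiSet (fun u => diffQuot φ x t u)) := by
  obtain ⟨s, hs, hdqs⟩ := EReal.exists_real_tendsto_of_tendsto_le hdq hur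
  exact mem_innerLim_iff.2 ⟨fun t => (w t, s t), hw.prodMk_nhds hs, hdqs⟩

end Subderivative

theorem proper_epi_differentiability_characterization_general
    {X : Type*} [NormedAddCommGroup X] [NormedSpace ℝ X]
    (φ ψ : X → EReal) (xb : X)
    (hψproper : properFun ψ)
    (hψle : ∀ u, ψ u ≤ subDeriv φ xb u) :
    (epiDiffAt φ xb ∧ properFun (subDeriv φ xb) ∧ ∀ u, ψ u = subDeriv φ xb u) ↔
    (∀ u : X, ∃ utl : ℝ → X, utl 0 = u ∧ Tendsto utl (𝓝[>] (0:ℝ)) (𝓝 u) ∧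
      Tendsto (fun t => diffQuot φ xb t (utl t)) (𝓝[>] (0:ℝ)) (𝓝 (ψ u))) := by
  constructor
  · rintro ⟨hepi, hproper, hψ⟩ u
    simpa only [hψ u] using exists_path_tendsto_subDeriv hepi (hproper.1 u)
  · intro H
    have hψ : ∀ u, ψ u = subDeriv φ xb u := fun u => by
      obtain ⟨w, -, hw, hdq⟩ := H u
      exact (hψle u).antisymm <| subDeriv_le_of_tendsto (tendsto_id.prodMk hw)
        (Eventually.of_forall fun _ => le_rfl) hdq
    refine ⟨epiDiffAt_iff.2 fun p hp => ?_,
      ⟨fun u => hψ u ▸ hψproper.1 u, hψproper.2.imp fun u h => hψ u ▸ h⟩, hψ⟩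
    obtain ⟨w, -, hw, hdq⟩ := H p.1
    exact mem_innerLim_epiSet_diffQuot_of_tendsto hw (hψ p.1 ▸ hdq) hp

/-- characterization of proper epi-differentiability via paths. -/
theorem proper_epi_differentiability_characterization
    {X : Type*} [NormedAddCommGroup X] [NormedSpace ℝ X]
    (φ ψ : X → EReal) (xb : X)
    (hφbot : ∀ x, φ x ≠ ⊥) (hxb : φ xb ≠ ⊤)
    (hψproper : properFun ψ)
    (hψle : ∀ u, ψ u ≤ subDeriv φ xb u) :
    (epiDiffAt φ xb ∧ properFun (subDeriv φ xb) ∧ ∀ u, ψ u = subDeriv φ xb u) ↔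
    (∀ u : X, ∃ utl : ℝ → X, utl 0 = u ∧ Tendsto utl (𝓝[>] (0:ℝ)) (𝓝 u) ∧
      Tendsto (fun t => diffQuot φ xb t (utl t)) (𝓝[>] (0:ℝ)) (𝓝 (ψ u))) :=
  proper_epi_differentiability_characterization_general φ ψ xb hψproper hψle
end
end

section
/- Let X be a normed space and let φ : X → (-∞,∞] be relatively Lipschitz continuous around x̄ ∈ dom φ with respect to its domain, with constant ℓ ≥ 0. Then the subderivative dφ(x̄) : X → [−∞,∞] is a proper function, its domain satisfies dom dφ(x̄) = T_{dom φ}(x̄), and |dφ(x̄)(u)| ≤ ℓ‖u‖ for all u ∈ T_{dom φ}(x̄). -/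
open Filter Topology Set Metric Pointwise

noncomputable section

variable {E : Type*} [NormedAddCommGroup E] [NormedSpace ℝ E]

/-!
For small `t > 0`, the relative Lipschitz estimate bounds the difference quotient
`(φ (x + t • w) - φ x) / t` by `ℓ‖w‖` in absolute value whenever `x + t • w ∈ dom φ`, and the
quotient is `+∞` otherwise. Hence `-ℓ‖u‖` is a lower bound for every `u`; if `u` is tangent to
`dom φ`, quotients with `x + t • w ∈ dom φ` occur arbitrarily close to `(0, u)` and give the upper
bound `ℓ‖u‖`; if it is not, all quotients near `(0, u)` are `+∞`.
-/

theorem Filter.liminf_le_of_frequently_le_of_tendsto {α β : Type*} [CompleteLinearOrder β]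
    [DenselyOrdered β] [TopologicalSpace β] [OrderTopology β] {l : Filter α} {f g : α → β}
    {b : β} (hfg : ∃ᶠ a in l, f a ≤ g a) (hg : Tendsto g l (𝓝 b)) : liminf f l ≤ b :=
  le_of_forall_gt_imp_ge_of_dense fun _ hc => liminf_le_of_frequently_le'
    ((hfg.and_eventually (hg.eventually (gt_mem_nhds hc))).mono fun _ h => h.1.trans h.2.le)

section

variable {φ : E → EReal} {Ω : Set E} {x u : E} {t ℓ : ℝ}

theorem mem_contTangent_iff_frequently :
    u ∈ contTangent Ω x ↔ ∃ᶠ p : ℝ × E in 𝓝[>] 0 ×ˢ 𝓝 u, x + p.1 • p.2 ∈ Ω := by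
  constructor
  · rintro ⟨t, v, ht, htl, hv, hmem⟩
    have hlim : Tendsto (fun k => (t k, v k)) atTop (𝓝[>] 0 ×ˢ 𝓝 u) :=
      (tendsto_nhdsWithin_iff.2 ⟨htl, .of_forall ht⟩).prodMk hv
    exact hlim.frequently (.of_forall hmem)
  · intro h
    obtain ⟨p, hp, hmem⟩ := exists_seq_forall_of_frequently
      (h.and_eventually (tendsto_fst.eventually self_mem_nhdsWithin))
    exact ⟨fun k => (p k).1, fun k => (p k).2, fun k => (hmem k).2,
      (tendsto_fst.comp hp).mono_right nhdsWithin_le_nhds, tendsto_snd.comp hp,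
      fun k => (hmem k).1⟩

theorem zero_mem_contTangent (hx : x ∈ Ω) : (0 : E) ∈ contTangent Ω x :=
  ⟨fun k => 1 / (k + 1), fun _ => 0, fun _ => by positivity,
    tendsto_one_div_add_atTop_nhds_zero_nat, tendsto_const_nhds, fun _ => by simpa using hx⟩

theorem RelLipschitzOn.eventually_abs_toReal_sub_le {F : Type*} [NormedAddCommGroup F]
    {φ : F → EReal} {Ω : Set F} {x : F} {ℓ : ℝ} (h : RelLipschitzOn φ Ω x ℓ)
    (hΩ : ∀ y ∈ Ω, φ y ≠ ⊥ ∧ φ y ≠ ⊤) (hx : x ∈ Ω) :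
    ∀ᶠ y in 𝓝 x, y ∈ Ω → |(φ y).toReal - (φ x).toReal| ≤ ℓ * ‖y - x‖ := by
  obtain ⟨U, hU, hlip⟩ := h
  have hxU := mem_of_mem_nhds hU
  filter_upwards [hU] with y hyU hy
  have hyx := hlip y ⟨hy, hyU⟩ x ⟨hx, hxU⟩
  have hxy := hlip x ⟨hx, hxU⟩ y ⟨hy, hyU⟩
  rw [← EReal.coe_toReal (hΩ y hy).2 (hΩ y hy).1, ← EReal.coe_toReal (hΩ x hx).2 (hΩ x hx).1,
    ← EReal.coe_sub, EReal.coe_le_coe_iff] at hyx hxy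
  rw [norm_sub_rev] at hxy
  exact abs_sub_le_iff.2 ⟨hyx, hxy⟩

theorem diffQuot_eq_top (ht : 0 < t) (hx : φ x ≠ ⊤) (hy : φ (x + t • u) = ⊤) :
    diffQuot φ x t u = ⊤ := by
  rw [diffQuot, hy, EReal.top_sub hx, EReal.coe_mul_top_of_pos (inv_pos.2 ht)]

theorem diffQuot_eq_coe (hx : φ x ≠ ⊥) (hx' : φ x ≠ ⊤) (hy : φ (x + t • u) ≠ ⊥)
    (hy' : φ (x + t • u) ≠ ⊤) :
    diffQuot φ x t u = ((t⁻¹ * ((φ (x + t • u)).toReal - (φ x).toReal) : ℝ) : EReal) := by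
  rw [diffQuot, EReal.coe_mul, EReal.coe_sub, EReal.coe_toReal hy' hy, EReal.coe_toReal hx' hx]

theorem abs_inv_mul_sub_le {a c t ℓ : ℝ} {w : E} (ht : 0 < t) (h : |a - c| ≤ ℓ * ‖t • w‖) :
    |t⁻¹ * (a - c)| ≤ ℓ * ‖w‖ := by
  rw [norm_smul, Real.norm_of_nonneg ht.le] at h
  rw [abs_mul, abs_of_pos (inv_pos.2 ht), inv_mul_le_iff₀ ht]
  linarith

theorem eventually_diffQuot_bounds (hlip : RelLipschitzOn φ {y | φ y ≠ ⊤} x ℓ)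
    (hφ : ∀ y, φ y ≠ ⊥) (hx : φ x ≠ ⊤) (u : E) :
    ∀ᶠ p : ℝ × E in 𝓝[>] 0 ×ˢ 𝓝 u,
      ((-(ℓ * ‖p.2‖) : ℝ) : EReal) ≤ diffQuot φ x p.1 p.2 ∧
      (φ (x + p.1 • p.2) ≠ ⊤ → diffQuot φ x p.1 p.2 ≤ ((ℓ * ‖p.2‖ : ℝ) : EReal)) := by
  have hmove : Tendsto (fun p : ℝ × E => x + p.1 • p.2) (𝓝[>] 0 ×ˢ 𝓝 u) (𝓝 x) := by
    have hfst : Tendsto Prod.fst (𝓝[>] (0 : ℝ) ×ˢ 𝓝 u) (𝓝 0) :=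
      tendsto_fst.mono_right nhdsWithin_le_nhds
    simpa using tendsto_const_nhds.add (hfst.smul tendsto_snd)
  filter_upwards [hmove.eventually
      (hlip.eventually_abs_toReal_sub_le (fun y hy => ⟨hφ y, hy⟩) hx),
    tendsto_fst.eventually self_mem_nhdsWithin] with ⟨t, w⟩ hclose (ht : 0 < t)
  by_cases hy : φ (x + t • w) = ⊤
  · simp [diffQuot_eq_top ht hx hy, hy]
  · have hq := abs_inv_mul_sub_le ht (by simpa using hclose hy)
    rw [diffQuot_eq_coe (hφ x) hx (hφ _) hy]
    exact ⟨EReal.coe_le_coe_iff.2 (abs_le.1 hq).1,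
      fun _ => EReal.coe_le_coe_iff.2 ((le_abs_self _).trans hq)⟩

theorem neg_mul_norm_le_subDeriv (hlip : RelLipschitzOn φ {y | φ y ≠ ⊤} x ℓ)
    (hφ : ∀ y, φ y ≠ ⊥) (hx : φ x ≠ ⊤) (u : E) :
    ((-(ℓ * ‖u‖) : ℝ) : EReal) ≤ subDeriv φ x u := by
  have hg : Tendsto (fun p : ℝ × E => ((-(ℓ * ‖p.2‖) : ℝ) : EReal)) (𝓝[>] 0 ×ˢ 𝓝 u)
      (𝓝 ((-(ℓ * ‖u‖) : ℝ) : EReal)) :=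
    EReal.tendsto_coe.2 (tendsto_snd.norm.const_mul ℓ).neg
  exact hg.liminf_eq ▸ liminf_le_liminf ((eventually_diffQuot_bounds hlip hφ hx u).mono
    fun _ h => h.1)

theorem subDeriv_le_mul_norm_of_mem_contTangent (hlip : RelLipschitzOn φ {y | φ y ≠ ⊤} x ℓ)
    (hφ : ∀ y, φ y ≠ ⊥) (hx : φ x ≠ ⊤) (hu : u ∈ contTangent {y | φ y ≠ ⊤} x) :
    subDeriv φ x u ≤ ((ℓ * ‖u‖ : ℝ) : EReal) :=
  liminf_le_of_frequently_le_of_tendsto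
    ((mem_contTangent_iff_frequently.1 hu).and_eventually
      (eventually_diffQuot_bounds hlip hφ hx u) |>.mono fun _ h => h.2.2 h.1)
    (EReal.tendsto_coe.2 (tendsto_snd.norm.const_mul ℓ))

theorem subDeriv_eq_top_of_notMem_contTangent (hx : φ x ≠ ⊤)
    (hu : u ∉ contTangent {y | φ y ≠ ⊤} x) : subDeriv φ x u = ⊤ := by
  rw [mem_contTangent_iff_frequently, not_frequently] at hu
  refine top_le_iff.1 (le_liminf_of_le (by isBoundedDefault) ?_)
  filter_upwards [hu, tendsto_fst.eventually self_mem_nhdsWithin] with p hp hp1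
  rw [diffQuot_eq_top hp1 hx (by simpa using hp)]

end

theorem subderivative_of_relatively_lipschitz_general
    {X : Type*} [NormedAddCommGroup X] [NormedSpace ℝ X]
    (φ : X → EReal) (xb : X) (ℓ : ℝ)
    (hφbot : ∀ x, φ x ≠ ⊥) (hxb : φ xb ≠ ⊤)
    (hlip : RelLipschitzOn φ {x | φ x ≠ ⊤} xb ℓ) :
    properFun (subDeriv φ xb) ∧
    {u | subDeriv φ xb u ≠ ⊤} = contTangent {x | φ x ≠ ⊤} xb ∧
    ∀ u ∈ contTangent {x | φ x ≠ ⊤} xb,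
      ((-(ℓ * ‖u‖) : ℝ) : EReal) ≤ subDeriv φ xb u ∧
      subDeriv φ xb u ≤ ((ℓ * ‖u‖ : ℝ) : EReal) := by
  have lower := neg_mul_norm_le_subDeriv hlip hφbot hxb
  have upper (u) (hu : u ∈ contTangent {x | φ x ≠ ⊤} xb) :=
    subDeriv_le_mul_norm_of_mem_contTangent hlip hφbot hxb hu
  refine ⟨⟨fun u h => EReal.coe_ne_bot _ (le_bot_iff.1 (h ▸ lower u)),
    0, ne_top_of_le_ne_top (EReal.coe_ne_top _) (upper 0 (zero_mem_contTangent hxb))⟩,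
    ?_, fun u hu => ⟨lower u, upper u hu⟩⟩
  ext u
  exact ⟨fun h => by_contra fun hu => h (subDeriv_eq_top_of_notMem_contTangent hxb hu),
    fun hu => ne_top_of_le_ne_top (EReal.coe_ne_top _) (upper u hu)⟩

/-- subderivatives of relatively Lipschitzian functions. -/
theorem subderivative_of_relatively_lipschitz
    {X : Type*} [NormedAddCommGroup X] [NormedSpace ℝ X]
    (φ : X → EReal) (xb : X) (ℓ : ℝ)
    (hφbot : ∀ x, φ x ≠ ⊥) (hxb : φ xb ≠ ⊤) (hℓ : 0 ≤ ℓ)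
    (hlip : RelLipschitzOn φ {x | φ x ≠ ⊤} xb ℓ) :
    properFun (subDeriv φ xb) ∧
    {u | subDeriv φ xb u ≠ ⊤} = contTangent {x | φ x ≠ ⊤} xb ∧
    ∀ u ∈ contTangent {x | φ x ≠ ⊤} xb,
      ((-(ℓ * ‖u‖) : ℝ) : EReal) ≤ subDeriv φ xb u ∧
      subDeriv φ xb u ≤ ((ℓ * ‖u‖ : ℝ) : EReal) :=
  subderivative_of_relatively_lipschitz_general φ xb ℓ hφbot hxb hlip
end
end

section
/- Let X and Y be normed spaces, let f : X → Y be Fréchet differentiable at x̄ ∈ X, and let θ : Y → (-∞,∞] be relatively Lipschitz continuous around ȳ := f(x̄) with respect to its domain. If θ is epi-differentiable at ȳ and the Abadie qualification condition holds at x̄ for φ := θ∘f, then the subderivative chain rule d(θ∘f)(x̄)(u) = dθ(ȳ)(∇f(x̄)u) holds for all u ∈ X. -/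
open Filter Topology Set Metric Pointwise

noncomputable section

variable {E : Type*} [NormedAddCommGroup E] [NormedSpace ℝ E]

/-!
The inequality `dθ(ȳ)(∇f(x̄)u) ≤ d(θ∘f)(x̄)(u)` holds for any `θ`: the difference quotients of
`θ ∘ f` at `(t, v)` are those of `θ` at `(t, t⁻¹(f(x̄ + tv) - ȳ))`, and the latter direction tends
to `∇f(x̄)u`. For the converse, take a real `r ≥ dθ(ȳ)(∇f(x̄)u)`. The quotients approaching `r`
are finite, so `∇f(x̄)u` is tangent to `dom θ`, and by the Abadie condition `x̄ + tₖvₖ ∈ dom φ`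
along some `tₖ ↓ 0`, `vₖ → u`. Epi-differentiability provides `wₖ → ∇f(x̄)u` and `rₖ → r` with
`Δ_{tₖ}θ(ȳ)(wₖ) ≤ rₖ`, and since both `f(x̄ + tₖvₖ)` and `ȳ + tₖwₖ` lie in `dom θ`, the relative
Lipschitz bound gives `Δ_{tₖ}φ(x̄)(vₖ) ≤ rₖ + ℓ‖zₖ - wₖ‖` with
`zₖ := tₖ⁻¹(f(x̄ + tₖvₖ) - ȳ) → ∇f(x̄)u`.
-/

section DifferenceQuotient

variable {θ : E → EReal} {y z w : E} {t ρ : ℝ}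

lemma ne_top_of_diffQuot_le_coe (hy : θ y ≠ ⊤) (ht : 0 < t) (h : diffQuot θ y t w ≤ ρ) :
    θ (y + t • w) ≠ ⊤ := by
  intro htop
  rw [diffQuot, htop, EReal.top_sub hy, EReal.coe_mul_top_of_pos (inv_pos.2 ht)] at h
  exact (EReal.coe_lt_top ρ).not_ge h

lemma diffQuot_eq_coe_toReal (hbot : ∀ y, θ y ≠ ⊥) (hy : θ y ≠ ⊤) (hw : θ (y + t • w) ≠ ⊤) :
    diffQuot θ y t w = ((t⁻¹ * ((θ (y + t • w)).toReal - (θ y).toReal) : ℝ) : EReal) := by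
  rw [diffQuot, ← EReal.coe_toReal hw (hbot _), ← EReal.coe_toReal hy (hbot y),
    ← EReal.coe_sub, ← EReal.coe_mul]
  simp

lemma diffQuot_le_of_sub_le (hbot : ∀ y, θ y ≠ ⊥) (hy : θ y ≠ ⊤) (ht : 0 < t)
    (hz : θ (y + t • z) ≠ ⊤) (hw : diffQuot θ y t w ≤ ρ) {ℓ : ℝ}
    (hlip : θ (y + t • z) - θ (y + t • w) ≤ ((ℓ * ‖(y + t • z) - (y + t • w)‖ : ℝ) : EReal)) :
    diffQuot θ y t z ≤ ((ρ + ℓ * ‖z - w‖ : ℝ) : EReal) := by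
  have hw' := ne_top_of_diffQuot_le_coe hy ht hw
  rw [diffQuot_eq_coe_toReal hbot hy hw', EReal.coe_le_coe_iff] at hw
  rw [← EReal.coe_toReal hz (hbot _), ← EReal.coe_toReal hw' (hbot _), ← EReal.coe_sub,
    EReal.coe_le_coe_iff, add_sub_add_left_eq_sub, ← smul_sub, norm_smul,
    Real.norm_of_nonneg ht.le] at hlip
  rw [diffQuot_eq_coe_toReal hbot hy hz, EReal.coe_le_coe_iff]
  have hsplit : t⁻¹ * ((θ (y + t • z)).toReal - (θ y).toReal) =
      t⁻¹ * ((θ (y + t • z)).toReal - (θ (y + t • w)).toReal) +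
        t⁻¹ * ((θ (y + t • w)).toReal - (θ y).toReal) := by ring
  have hlip' : t⁻¹ * ((θ (y + t • z)).toReal - (θ (y + t • w)).toReal) ≤ ℓ * ‖z - w‖ := by
    rw [inv_mul_le_iff₀ ht]
    linarith
  linarith

end DifferenceQuotient

lemma tendsto_nhdsGT_prod_of_pos {α : Type*} [TopologicalSpace α] {t : ℕ → ℝ} {v : ℕ → α}
    {u : α} (ht : ∀ k, 0 < t k) (ht0 : Tendsto t atTop (𝓝 0)) (hv : Tendsto v atTop (𝓝 u)) :
    Tendsto (fun k => (t k, v k)) atTop ((𝓝[>] 0) ×ˢ 𝓝 u) :=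
  (tendsto_nhdsWithin_iff.2 ⟨ht0, .of_forall ht⟩).prodMk hv

section Subderivative

variable {X Y : Type*} [NormedAddCommGroup X] [NormedSpace ℝ X]
  [NormedAddCommGroup Y] [NormedSpace ℝ Y]

lemma subDeriv_le_liminf_diffQuot {α : Type*} {l : Filter α} {φ : X → EReal} {x u : X}
    {t : α → ℝ} {v : α → X} (h : Tendsto (fun a => (t a, v a)) l ((𝓝[>] 0) ×ˢ 𝓝 u)) :
    subDeriv φ x u ≤ liminf (fun a => diffQuot φ x (t a) (v a)) l :=
  h.liminf_le_liminf_comp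

lemma diffQuot_comp (θ : Y → EReal) (f : X → Y) (x : X) {t : ℝ} (ht : t ≠ 0) (v : X) :
    diffQuot (fun x => θ (f x)) x t v = diffQuot θ (f x) t (t⁻¹ • (f (x + t • v) - f x)) := by
  simp only [diffQuot, smul_inv_smul₀ ht, add_sub_cancel]

lemma HasFDerivAt.tendsto_inv_smul_sub {f : X → Y} {f' : X →L[ℝ] Y} {x : X}
    (hf : HasFDerivAt f f' x) (u : X) :
    Tendsto (fun p : ℝ × X => p.1⁻¹ • (f (x + p.1 • p.2) - f x)) ((𝓝[>] 0) ×ˢ 𝓝 u)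
      (𝓝 (f' u)) := by
  have hpos : ∀ᶠ p : ℝ × X in (𝓝[>] 0) ×ˢ 𝓝 u, 0 < p.1 :=
    eventually_mem_nhdsWithin.prod_inl _
  refine (hasFDerivWithinAt_univ.2 hf).lim ?_ (.of_forall fun _ => mem_univ _) ?_
  · simpa using (tendsto_nhdsWithin_iff.1 tendsto_fst).1.smul
      (tendsto_snd (f := 𝓝[>] (0 : ℝ)) (g := 𝓝 u))
  · refine tendsto_snd.congr' ?_
    filter_upwards [hpos] with p hp
    rw [inv_smul_smul₀ hp.ne']

lemma subDeriv_le_subDeriv_comp {f : X → Y} {f' : X →L[ℝ] Y} {x : X} (hf : HasFDerivAt f f' x)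
    (θ : Y → EReal) (u : X) :
    subDeriv θ (f x) (f' u) ≤ subDeriv (fun x => θ (f x)) x u := by
  have hpos : ∀ᶠ p : ℝ × X in (𝓝[>] 0) ×ˢ 𝓝 u, 0 < p.1 :=
    eventually_mem_nhdsWithin.prod_inl _
  refine (subDeriv_le_liminf_diffQuot (tendsto_fst.prodMk (hf.tendsto_inv_smul_sub u))).trans_eq
    (liminf_congr ?_)
  filter_upwards [hpos] with p hp
  rw [diffQuot_comp θ f x hp.ne']

lemma fst_mem_contTangent_of_mem_outerLim {θ : Y → EReal} {y : Y} {p : Y × ℝ}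
    (hy : θ y ≠ ⊤) (hp : p ∈ outerLim (fun t => epiSet (fun w => diffQuot θ y t w))) :
    p.1 ∈ contTangent {z | θ z ≠ ⊤} y := by
  obtain ⟨t, w, ht, ht0, hw, hepi⟩ := hp
  exact ⟨t, fun k => (w k).1, ht, ht0, (continuous_fst.tendsto p).comp hw,
    fun k => ne_top_of_diffQuot_le_coe hy (ht k) (hepi k)⟩

lemma liminf_diffQuot_le_of_mem_innerLim {θ : Y → EReal} {y w₀ : Y} {r : ℝ}
    (hbot : ∀ y, θ y ≠ ⊥) (hy : θ y ≠ ⊤) (hlip : RelLipschitzAround θ {z | θ z ≠ ⊤} y)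
    (hr : (w₀, r) ∈ innerLim (fun t => epiSet (fun w => diffQuot θ y t w)))
    {t : ℕ → ℝ} {z : ℕ → Y} (ht : ∀ k, 0 < t k) (ht0 : Tendsto t atTop (𝓝 0))
    (hz : Tendsto z atTop (𝓝 w₀)) (hdom : ∀ k, θ (y + t k • z k) ≠ ⊤) :
    liminf (fun k => diffQuot θ y (t k) (z k)) atTop ≤ r := by
  obtain ⟨w, hw, hepi⟩ := hr t ht ht0
  obtain ⟨ℓ, -, U, hU, hlipU⟩ := hlip
  have hnear {s : ℕ → Y} (hs : Tendsto s atTop (𝓝 w₀)) : ∀ᶠ k in atTop, y + t k • s k ∈ U := by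
    have : Tendsto (fun k => y + t k • s k) atTop (𝓝 (y + (0 : ℝ) • w₀)) :=
      tendsto_const_nhds.add (ht0.smul hs)
    rw [zero_smul, add_zero] at this
    exact this hU
  have hw₁ : Tendsto (fun k => (w k).1) atTop (𝓝 w₀) := (continuous_fst.tendsto _).comp hw
  have hbound : ∀ᶠ k in atTop,
      diffQuot θ y (t k) (z k) ≤ (((w k).2 + ℓ * ‖z k - (w k).1‖ : ℝ) : EReal) := by
    filter_upwards [hepi, hnear hz, hnear hw₁] with k hk hzU hwU
    exact diffQuot_le_of_sub_le hbot hy (ht k) (hdom k) hk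
      (hlipU _ ⟨hdom k, hzU⟩ _ ⟨ne_top_of_diffQuot_le_coe hy (ht k) hk, hwU⟩)
  have hlim : Tendsto (fun k => (w k).2 + ℓ * ‖z k - (w k).1‖) atTop (𝓝 r) := by
    simpa using ((continuous_snd.tendsto _).comp hw).add ((hz.sub hw₁).norm.const_mul ℓ)
  calc liminf (fun k => diffQuot θ y (t k) (z k)) atTop
      ≤ liminf (fun k => (((w k).2 + ℓ * ‖z k - (w k).1‖ : ℝ) : EReal)) atTop :=
        liminf_le_liminf hbound
    _ = r := (EReal.tendsto_coe.2 hlim).liminf_eq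

lemma subDeriv_comp_le_of_epiDiffAt {f : X → Y} {f' : X →L[ℝ] Y} {θ : Y → EReal} {x : X}
    (hf : HasFDerivAt f f' x) (hbot : ∀ y, θ y ≠ ⊥) (hx : θ (f x) ≠ ⊤)
    (hlip : RelLipschitzAround θ {y | θ y ≠ ⊤} (f x)) (hepi : epiDiffAt θ (f x))
    (hAQC : {u | f' u ∈ contTangent {y | θ y ≠ ⊤} (f x)} ⊆ contTangent {x | θ (f x) ≠ ⊤} x)
    (u : X) :
    subDeriv (fun x => θ (f x)) x u ≤ subDeriv θ (f x) (f' u) := by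
  refine EReal.le_of_forall_lt_iff_le.1 fun r hr => ?_
  have hmem : (f' u, r) ∈ epiSet (subDeriv θ (f x)) := hr.le
  obtain ⟨t, v, ht, ht0, hv, hdom⟩ :=
    hAQC (fst_mem_contTangent_of_mem_outerLim hx (hepi.1 ▸ hmem))
  have htv := tendsto_nhdsGT_prod_of_pos ht ht0 hv
  calc subDeriv (fun x => θ (f x)) x u
      ≤ liminf (fun k => diffQuot (fun x => θ (f x)) x (t k) (v k)) atTop :=
        subDeriv_le_liminf_diffQuot htv
    _ = liminf (fun k => diffQuot θ (f x) (t k) ((t k)⁻¹ • (f (x + t k • v k) - f x))) atTop := by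
        simp only [diffQuot_comp θ f x (ht _).ne']
    _ ≤ r := by
        refine liminf_diffQuot_le_of_mem_innerLim hbot hx hlip (hepi.2 ▸ hmem) ht ht0
          ((hf.tendsto_inv_smul_sub u).comp htv) fun k => ?_
        rw [smul_inv_smul₀ (ht k).ne', add_sub_cancel]
        exact hdom k

end Subderivative

/-- subderivative chain rule under the Abadie qualification condition. -/
theorem subderivative_chain_rule_AQC
    {X Y : Type*} [NormedAddCommGroup X] [NormedSpace ℝ X]
    [NormedAddCommGroup Y] [NormedSpace ℝ Y]
    (f : X → Y) (f' : X →L[ℝ] Y) (θ : Y → EReal) (xb : X)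
    (hf' : HasFDerivAt f f' xb)
    (hθbot : ∀ y, θ y ≠ ⊥) (hxb : θ (f xb) ≠ ⊤)
    (hθlip : RelLipschitzAround θ {y | θ y ≠ ⊤} (f xb))
    (hθepi : epiDiffAt θ (f xb))
    (hAQC : contTangent {x | θ (f x) ≠ ⊤} xb =
      {u : X | f' u ∈ contTangent {y | θ y ≠ ⊤} (f xb)}) :
    ∀ u : X, subDeriv (fun x => θ (f x)) xb u = subDeriv θ (f xb) (f' u) := by
  intro u
  exact le_antisymm (subDeriv_comp_le_of_epiDiffAt hf' hθbot hxb hθlip hθepi hAQC.ge u)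
    (subDeriv_le_subDeriv_comp hf' θ u)
end
end

section
/- Let X and Y be normed spaces, let A : X → Y be a bounded linear operator, a ∈ Y, and let θ : Y → (-∞,∞] be piecewise linear-quadratic. Define φ(x) := θ(Ax + a). Then the subderivative chain rule dφ(x)(w) = dθ(Ax+a)(Aw) holds for all x ∈ dom φ and all w ∈ X. If in addition θ is convex and the set A*(∂θ(Ax+a)) is weak* closed in X*, then ∂⁻φ(x) = A*(∂θ(Ax+a)) for all x ∈ dom φ, where ∂θ denotes the subdifferential of convex analysis. -/
open Filter Topology Set Metric Pointwise

noncomputable section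

variable {E : Type*} [NormedAddCommGroup E] [NormedSpace ℝ E]

/-- A polyhedral convex set: intersection of finitely many closed half-spaces. -/
def IsPolyhedral {Y : Type*} [NormedAddCommGroup Y] [NormedSpace ℝ Y]
    (Ω : Set Y) : Prop :=
  ∃ (m : ℕ) (c : Fin m → (Y →L[ℝ] ℝ)) (d : Fin m → ℝ),
    Ω = {y | ∀ j, c j y ≤ d j}

/-- Piecewise linear-quadratic extended-real-valued function. -/
def PiecewiseLQ {Y : Type*} [NormedAddCommGroup Y] [NormedSpace ℝ Y]
    (θ : Y → EReal) : Prop :=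
  ∃ (s : ℕ) (Ω : Fin s → Set Y)
    (B : Fin s → (Y →L[ℝ] (Y →L[ℝ] ℝ))) (b : Fin s → (Y →L[ℝ] ℝ)) (β : Fin s → ℝ),
    (∀ i, IsPolyhedral (Ω i)) ∧
    (∀ i, ∀ y z : Y, B i y z = B i z y) ∧
    {y | θ y ≠ ⊤} = ⋃ i, Ω i ∧
    ∀ i, ∀ y ∈ Ω i, θ y = ((B i y y + b i y + β i : ℝ) : EReal)

/-- Convexity of an extended-real-valued function via its epigraph. -/
def ERealConvexOn {Y : Type*} [NormedAddCommGroup Y] [NormedSpace ℝ Y]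
    (θ : Y → EReal) : Prop :=
  Convex ℝ {p : Y × ℝ | θ p.1 ≤ (p.2 : EReal)}

/-- Subdifferential of convex analysis. -/
def convSubdiff {Y : Type*} [NormedAddCommGroup Y] [NormedSpace ℝ Y]
    (θ : Y → EReal) (y : Y) : Set (Y →L[ℝ] ℝ) :=
  {v | ∀ z : Y, θ y + ((v (z - y) : ℝ) : EReal) ≤ θ z}

/-!
Along a ray `y + t • u` a piecewise linear-quadratic `θ` eventually agrees with one quadratic
piece, and because the pieces are polyhedral, rays in nearby directions that stay in a piece `Ωᵢ`
force `u` to be a feasible direction of `Ωᵢ` at `y`. Hence the subderivative `dθ(y)(u)` is the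
minimum of `2 Bᵢ(y, u) + bᵢ(u)` over the pieces feasible in direction `u`, and it coincides with
the radial lower derivative `liminf_{t ↓ 0} (θ (y + t • u) - θ y) / t`. The radial derivative
obviously commutes with affine substitution, and `θ (A · + a)` is again piecewise
linear-quadratic, which gives the chain rule.

For convex `θ` the function `h = dθ(y)` is closed and sublinear, and its continuous linear
minorants are exactly `∂θ(y)`; Farkas' lemma for its epigraph cone shows that `h` is the supremum
of these minorants. If `v ∈ ∂⁻φ(x)` lay outside the weak* closed convex set `A* ∂θ(y)`, a
separating weak* continuous functional would be evaluation at some `w`, and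
`h (A w) ≤ c < v w ≤ dφ(x)(w) = h (A w)`.
-/

section FeasibleDirections

def feasibleDirections (Ω : Set E) (y : E) : Set E :=
  {u | ∀ᶠ t in 𝓝[>] (0 : ℝ), y + t • u ∈ Ω}

lemma nhdsGT_prod_le_nhds {F : Type*} [TopologicalSpace F] (u : F) :
    𝓝[>] (0 : ℝ) ×ˢ 𝓝 u ≤ 𝓝 ((0 : ℝ), u) :=
  (Filter.prod_mono nhdsWithin_le_nhds le_rfl).trans_eq nhds_prod_eq.symm

lemma tendsto_add_smul_nhdsGT (y u : E) :
    Tendsto (fun q : ℝ × E => y + q.1 • q.2) (𝓝[>] 0 ×ˢ 𝓝 u) (𝓝 y) := by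
  have h : Continuous (fun q : ℝ × E => y + q.1 • q.2) := by fun_prop
  simpa using (h.tendsto ((0 : ℝ), u)).mono_left (nhdsGT_prod_le_nhds u)

lemma IsPolyhedral.isClosed {Ω : Set E} (hΩ : IsPolyhedral Ω) : IsClosed Ω := by
  obtain ⟨m, c, d, rfl⟩ := hΩ
  simp only [Set.ofPred_forall]
  exact isClosed_iInter fun j => isClosed_le (c j).continuous continuous_const

lemma IsPolyhedral.preimage_affine {X : Type*} [NormedAddCommGroup X] [NormedSpace ℝ X]
    {Ω : Set E} (hΩ : IsPolyhedral Ω) (A : X →L[ℝ] E) (a : E) :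
    IsPolyhedral ((fun x => A x + a) ⁻¹' Ω) := by
  obtain ⟨m, c, d, rfl⟩ := hΩ
  refine ⟨m, fun j => (c j).comp A, fun j => d j - c j a, ?_⟩
  ext x
  simp only [Set.mem_preimage, Set.mem_ofPred_eq, map_add, ContinuousLinearMap.comp_apply,
    le_sub_iff_add_le]

lemma mem_of_mem_feasibleDirections {Ω : Set E} {y u : E} (hΩ : IsClosed Ω)
    (hu : u ∈ feasibleDirections Ω y) : y ∈ Ω := by
  have h : Continuous fun t : ℝ => y + t • u := by fun_prop
  exact hΩ.mem_of_tendsto (by simpa using (h.tendsto 0).mono_left (nhdsWithin_le_nhds (s := Ioi 0)))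
    (show ∀ᶠ t in 𝓝[>] (0 : ℝ), y + t • u ∈ Ω from hu)

lemma smul_mem_feasibleDirections {Ω : Set E} {y u : E} (hu : u ∈ feasibleDirections Ω y)
    {m : ℝ} (hm : 0 < m) : m • u ∈ feasibleDirections Ω y := by
  have h : Tendsto (fun t : ℝ => t * m) (𝓝[>] 0) (𝓝[>] 0) :=
    tendsto_nhdsWithin_of_tendsto_nhds_of_eventually_within _
      ((continuous_mul_const m).tendsto' 0 0 (zero_mul m) |>.mono_left nhdsWithin_le_nhds)
      (eventually_nhdsWithin_of_forall fun t (ht : 0 < t) => mul_pos ht hm)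
  filter_upwards [h.eventually hu] with t ht
  rwa [smul_smul]

lemma mem_feasibleDirections_iff {m : ℕ} {c : Fin m → E →L[ℝ] ℝ} {d : Fin m → ℝ} {y u : E}
    (hy : ∀ j, c j y ≤ d j) :
    u ∈ feasibleDirections {z | ∀ j, c j z ≤ d j} y ↔ ∀ j, c j y = d j → c j u ≤ 0 := by
  simp only [feasibleDirections, Set.mem_ofPred_eq, map_add, map_smul, smul_eq_mul,
    eventually_all]
  refine forall_congr' fun j => ⟨fun h hj => ?_, fun h => ?_⟩
  · obtain ⟨t, ht, ht0⟩ := (h.and self_mem_nhdsWithin).exists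
    rw [hj] at ht
    exact nonpos_of_mul_nonpos_right (by linarith) ht0
  · rcases (hy j).eq_or_lt with hj | hj
    · filter_upwards [self_mem_nhdsWithin] with t (ht : 0 < t)
      nlinarith [h hj]
    · have hc : Continuous fun t : ℝ => c j y + t * c j u := by fun_prop
      exact (((hc.tendsto 0).mono_left (nhdsWithin_le_nhds (s := Ioi 0))).eventually_lt_const
        (by simpa using hj)).mono fun t ht => ht.le

lemma IsPolyhedral.isClosed_feasibleDirections {Ω : Set E} (hΩ : IsPolyhedral Ω) (y : E) :
    IsClosed (feasibleDirections Ω y) := by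
  by_cases hy : y ∈ Ω
  · obtain ⟨m, c, d, rfl⟩ := hΩ
    have h : feasibleDirections {z | ∀ j, c j z ≤ d j} y =
        ⋂ j, {u | c j y = d j → c j u ≤ 0} := by
      ext u
      simp [mem_feasibleDirections_iff hy]
    refine h ▸ isClosed_iInter fun j => ?_
    by_cases hj : c j y = d j
    · simpa [hj] using isClosed_le (c j).continuous continuous_const
    · simp [hj]
  · convert isClosed_empty
    exact Set.eq_empty_of_forall_notMem fun u hu =>
      hy (mem_of_mem_feasibleDirections hΩ.isClosed hu)

lemma IsPolyhedral.eventually_notMem {Ω : Set E} (hΩ : IsPolyhedral Ω) {y u : E}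
    (hu : u ∉ feasibleDirections Ω y) :
    ∀ᶠ q : ℝ × E in 𝓝[>] 0 ×ˢ 𝓝 u, y + q.1 • q.2 ∉ Ω := by
  by_cases hy : y ∈ Ω
  · obtain ⟨m, c, d, rfl⟩ := hΩ
    rw [mem_feasibleDirections_iff hy] at hu
    push Not at hu
    obtain ⟨j, hj, hju⟩ := hu
    filter_upwards [Eventually.prod_inl self_mem_nhdsWithin _,
      Eventually.prod_inr (((c j).continuous.tendsto u).eventually_const_lt hju) _]
      with q (hq1 : 0 < q.1) hq2 hmem
    have := hmem j
    rw [map_add, map_smul, smul_eq_mul, hj] at this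
    nlinarith
  · exact (tendsto_add_smul_nhdsGT y u).eventually (hΩ.isClosed.isOpen_compl.eventually_mem hy)

end FeasibleDirections

section RadialSubDeriv

def radialSubDeriv (φ : E → EReal) (x u : E) : EReal :=
  liminf (fun t => diffQuot φ x t u) (𝓝[>] 0)

lemma subDeriv_le_radialSubDeriv (φ : E → EReal) (x u : E) :
    subDeriv φ x u ≤ radialSubDeriv φ x u := by
  have h : Tendsto (fun t : ℝ => (t, u)) (𝓝[>] 0) (𝓝[>] 0 ×ˢ 𝓝 u) :=
    tendsto_id.prodMk tendsto_const_nhds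
  exact (liminf_le_liminf_of_le h).trans_eq (liminf_comp _ _ _).symm

lemma radialSubDeriv_comp_affine {X : Type*} [NormedAddCommGroup X] [NormedSpace ℝ X]
    (θ : E → EReal) (A : X →L[ℝ] E) (a : E) (x w : X) :
    radialSubDeriv (fun x' => θ (A x' + a)) x w = radialSubDeriv θ (A x + a) (A w) := by
  simp only [radialSubDeriv, diffQuot, map_add, map_smul, add_right_comm]

lemma diffQuot_eq_top_s9 {θ : E → EReal} {y u : E} {t : ℝ} (hy : θ y ≠ ⊤) (ht : 0 < t)
    (h : θ (y + t • u) = ⊤) : diffQuot θ y t u = ⊤ := by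
  rw [diffQuot, h, EReal.top_sub hy, EReal.coe_mul_top_of_pos (inv_pos.2 ht)]

end RadialSubDeriv

structure PiecewiseLQData (θ : E → EReal) where
  s : ℕ
  Ω : Fin s → Set E
  B : Fin s → E →L[ℝ] E →L[ℝ] ℝ
  b : Fin s → E →L[ℝ] ℝ
  β : Fin s → ℝ
  isPolyhedral : ∀ i, IsPolyhedral (Ω i)
  symm : ∀ i y z, B i y z = B i z y
  dom_eq : {y | θ y ≠ ⊤} = ⋃ i, Ω i
  eq_on : ∀ i, ∀ y ∈ Ω i, θ y = ((B i y y + b i y + β i : ℝ) : EReal)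

lemma PiecewiseLQ.nonempty_data {θ : E → EReal} (hθ : PiecewiseLQ θ) :
    Nonempty (PiecewiseLQData θ) :=
  let ⟨s, Ω, B, b, β, hΩ, hB, hdom, hθ⟩ := hθ
  ⟨⟨s, Ω, B, b, β, hΩ, hB, hdom, hθ⟩⟩

namespace PiecewiseLQData

variable {θ : E → EReal} (R : PiecewiseLQData θ)

lemma exists_mem_of_ne_top {y : E} (hy : θ y ≠ ⊤) : ∃ i, y ∈ R.Ω i :=
  mem_iUnion.mp (R.dom_eq ▸ hy : y ∈ ⋃ i, R.Ω i)

lemma diffQuot_eq {i : Fin R.s} {y u : E} {t : ℝ} (hy : y ∈ R.Ω i) (ht : 0 < t)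
    (hyu : y + t • u ∈ R.Ω i) :
    diffQuot θ y t u = ((2 * R.B i y u + R.b i u + t * R.B i u u : ℝ) : EReal) := by
  rw [diffQuot, R.eq_on i _ hyu, R.eq_on i _ hy, ← EReal.coe_sub, ← EReal.coe_mul]
  congr 1
  simp only [map_add, map_smul, add_apply, smul_apply, smul_eq_mul, R.symm i u y]
  field_simp
  ring

lemma radialSubDeriv_le {i : Fin R.s} {y u : E} (hu : u ∈ feasibleDirections (R.Ω i) y) :
    radialSubDeriv θ y u ≤ ((2 * R.B i y u + R.b i u : ℝ) : EReal) := by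
  have hy := mem_of_mem_feasibleDirections (R.isPolyhedral i).isClosed hu
  have hlim : Tendsto (fun t : ℝ => ((2 * R.B i y u + R.b i u + t * R.B i u u : ℝ) : EReal))
      (𝓝[>] 0) (𝓝 ((2 * R.B i y u + R.b i u : ℝ) : EReal)) := by
    have h : Continuous fun t : ℝ => ((2 * R.B i y u + R.b i u + t * R.B i u u : ℝ) : EReal) :=
      continuous_coe_real_ereal.comp (by fun_prop)
    simpa using (h.tendsto 0).mono_left (nhdsWithin_le_nhds (s := Ioi 0))
  refine (liminf_congr ?_).trans_le hlim.liminf_eq.le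
  filter_upwards [show ∀ᶠ t in 𝓝[>] (0 : ℝ), y + t • u ∈ R.Ω i from hu, self_mem_nhdsWithin]
    with t hyu ht
  exact R.diffQuot_eq hy ht hyu

def deriv (y u : E) : EReal :=
  sInf ((fun i => ((2 * R.B i y u + R.b i u : ℝ) : EReal)) ''
    {i | u ∈ feasibleDirections (R.Ω i) y})

lemma deriv_le {i : Fin R.s} {y u : E} (hu : u ∈ feasibleDirections (R.Ω i) y) :
    R.deriv y u ≤ ((2 * R.B i y u + R.b i u : ℝ) : EReal) :=
  sInf_le ⟨i, hu, rfl⟩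

lemma radialSubDeriv_le_deriv (y u : E) : radialSubDeriv θ y u ≤ R.deriv y u :=
  le_sInf <| forall_mem_image.2 fun _ hi => R.radialSubDeriv_le hi

lemma eventually_le_diffQuot (i : Fin R.s) {y u : E} {r : ℝ} (hr : (r : EReal) < R.deriv y u) :
    ∀ᶠ q : ℝ × E in 𝓝[>] 0 ×ˢ 𝓝 u, y + q.1 • q.2 ∈ R.Ω i → (r : EReal) ≤ diffQuot θ y q.1 q.2 := by
  by_cases hu : u ∈ feasibleDirections (R.Ω i) y
  · have hy := mem_of_mem_feasibleDirections (R.isPolyhedral i).isClosed hu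
    have hri : r < 2 * R.B i y u + R.b i u :=
      EReal.coe_lt_coe_iff.1 (hr.trans_le (R.deriv_le hu))
    have hc : Continuous fun q : ℝ × E => 2 * R.B i y q.2 + R.b i q.2 + q.1 * R.B i q.2 q.2 := by
      fun_prop
    have hlim := (hc.tendsto ((0 : ℝ), u)).mono_left (nhdsGT_prod_le_nhds u)
    simp only [zero_mul, add_zero] at hlim
    filter_upwards [hlim.eventually_const_lt hri, Eventually.prod_inl self_mem_nhdsWithin _]
      with q hq (hq1 : 0 < q.1) hyq
    rw [R.diffQuot_eq hy hq1 hyq]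
    exact EReal.coe_le_coe_iff.2 hq.le
  · filter_upwards [(R.isPolyhedral i).eventually_notMem hu] with q hq hyq
    exact absurd hyq hq

lemma deriv_le_subDeriv {y : E} (hy : θ y ≠ ⊤) (u : E) : R.deriv y u ≤ subDeriv θ y u := by
  refine EReal.ge_of_forall_gt_iff_ge.1 fun r hr => le_liminf_of_le (by isBoundedDefault) ?_
  filter_upwards [eventually_all.2 fun i => R.eventually_le_diffQuot i hr,
    Eventually.prod_inl self_mem_nhdsWithin _] with q hq (hq1 : 0 < q.1)
  by_cases htop : θ (y + q.1 • q.2) = ⊤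
  · simp [diffQuot_eq_top_s9 hy hq1 htop]
  · obtain ⟨i, hi⟩ := R.exists_mem_of_ne_top htop
    exact hq i hi

lemma subDeriv_eq_deriv {y : E} (hy : θ y ≠ ⊤) (u : E) : subDeriv θ y u = R.deriv y u :=
  le_antisymm ((subDeriv_le_radialSubDeriv θ y u).trans (R.radialSubDeriv_le_deriv y u))
    (R.deriv_le_subDeriv hy u)

end PiecewiseLQData

namespace PiecewiseLQ

variable {θ : E → EReal}

lemma ne_bot (hθ : PiecewiseLQ θ) (y : E) : θ y ≠ ⊥ := by
  obtain ⟨R⟩ := hθ.nonempty_data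
  by_cases hy : θ y = ⊤
  · simp [hy]
  · obtain ⟨i, hi⟩ := R.exists_mem_of_ne_top hy
    simp [R.eq_on i y hi]

lemma subDeriv_eq_radialSubDeriv (hθ : PiecewiseLQ θ) {y : E} (hy : θ y ≠ ⊤) (u : E) :
    subDeriv θ y u = radialSubDeriv θ y u := by
  obtain ⟨R⟩ := hθ.nonempty_data
  exact le_antisymm (subDeriv_le_radialSubDeriv θ y u)
    ((R.radialSubDeriv_le_deriv y u).trans (R.deriv_le_subDeriv hy u))

lemma comp_affine {X : Type*} [NormedAddCommGroup X] [NormedSpace ℝ X] (hθ : PiecewiseLQ θ)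
    (A : X →L[ℝ] E) (a : E) : PiecewiseLQ (fun x => θ (A x + a)) := by
  obtain ⟨s, Ω, B, b, β, hΩ, hB, hdom, hθ⟩ := hθ
  refine ⟨s, fun i => (fun x => A x + a) ⁻¹' Ω i, fun i => (B i).bilinearComp A A,
    fun i => (b i).comp A + (2 : ℝ) • (B i a).comp A, fun i => B i a a + b i a + β i,
    fun i => (hΩ i).preimage_affine A a, fun i x z => hB i (A x) (A z), ?_, fun i x hx => ?_⟩
  · ext x
    simpa only [mem_iUnion, mem_preimage, mem_ofPred_eq] using Set.ext_iff.1 hdom (A x + a)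
  · simp only [hθ i _ hx, map_add, add_apply, ContinuousLinearMap.bilinearComp_apply,
      ContinuousLinearMap.comp_apply, smul_apply, smul_eq_mul, hB i (A x) a]
    congr 1
    ring

lemma subDeriv_comp_affine {X : Type*} [NormedAddCommGroup X] [NormedSpace ℝ X]
    (hθ : PiecewiseLQ θ) (A : X →L[ℝ] E) (a : E) {x : X} (hx : θ (A x + a) ≠ ⊤) (w : X) :
    subDeriv (fun x' => θ (A x' + a)) x w = subDeriv θ (A x + a) (A w) := by
  rw [(hθ.comp_affine A a).subDeriv_eq_radialSubDeriv hx, hθ.subDeriv_eq_radialSubDeriv hx,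
    radialSubDeriv_comp_affine]

end PiecewiseLQ

section LinMinorants

def linMinorants (h : E → EReal) : Set (E →L[ℝ] ℝ) :=
  {l | ∀ u, (l u : EReal) ≤ h u}

lemma mem_linMinorants_iff {h : E → EReal} {l : E →L[ℝ] ℝ} :
    l ∈ linMinorants h ↔ ∀ q ∈ epiSet h, l q.1 ≤ q.2 :=
  ⟨fun hl q hq => EReal.coe_le_coe_iff.1 ((hl q.1).trans hq), fun hl u =>
    EReal.le_of_forall_lt_iff_le.1 fun r hr => EReal.coe_le_coe_iff.2 (hl (u, r) hr.le)⟩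

lemma inv_smul_mem_linMinorants {h : E → EReal} {g : E →L[ℝ] ℝ} {γ : ℝ} (hγ : 0 < γ)
    (hg : ∀ q ∈ epiSet h, g q.1 ≤ γ * q.2) : γ⁻¹ • g ∈ linMinorants h :=
  mem_linMinorants_iff.2 fun q hq => by
    simpa [inv_mul_le_iff₀ hγ] using hg q hq

lemma convex_linMinorants (h : E → EReal) : Convex ℝ (linMinorants h) := by
  intro l₁ h₁ l₂ h₂ a c ha hc hac
  refine mem_linMinorants_iff.2 fun q hq => ?_
  have e₁ := mem_linMinorants_iff.1 h₁ q hq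
  have e₂ := mem_linMinorants_iff.1 h₂ q hq
  calc a * l₁ q.1 + c * l₂ q.1 ≤ a * q.2 + c * q.2 := by gcongr
    _ = q.2 := by rw [← add_mul, hac, one_mul]

end LinMinorants

section Convex

variable {θ : E → EReal} {y : E} {p : ℝ}

lemma diffQuot_le_coe_iff (hp : θ y = p) {t : ℝ} (ht : 0 < t) (u : E) (r : ℝ) :
    diffQuot θ y t u ≤ r ↔ θ (y + t • u) ≤ ((p + t * r : ℝ) : EReal) := by
  rw [diffQuot, hp]
  induction θ (y + t • u) using EReal.rec with
  | bot => simp [EReal.coe_mul_bot_of_pos (inv_pos.2 ht)]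
  | top => simpa [EReal.coe_mul_top_of_pos (inv_pos.2 ht)] using EReal.coe_ne_top (p + t * r)
  | coe q =>
    rw [← EReal.coe_sub, ← EReal.coe_mul, EReal.coe_le_coe_iff, EReal.coe_le_coe_iff,
      inv_mul_le_iff₀ ht]
    constructor <;> intro <;> linarith

lemma coe_le_diffQuot_iff (hp : θ y = p) {t : ℝ} (ht : 0 < t) (u : E) (r : ℝ) :
    (r : EReal) ≤ diffQuot θ y t u ↔ ((p + t * r : ℝ) : EReal) ≤ θ (y + t • u) := by
  rw [diffQuot, hp]
  induction θ (y + t • u) using EReal.rec with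
  | bot => simpa [EReal.coe_mul_bot_of_pos (inv_pos.2 ht)] using EReal.coe_ne_bot (p + t * r)
  | top => simp [EReal.coe_mul_top_of_pos (inv_pos.2 ht)]
  | coe q =>
    rw [← EReal.coe_sub, ← EReal.coe_mul, EReal.coe_le_coe_iff, EReal.coe_le_coe_iff,
      le_inv_mul_iff₀ ht]
    constructor <;> intro <;> linarith

lemma ERealConvexOn.le_combo (hθ : ERealConvexOn θ) {x₁ x₂ : E} {s₁ s₂ a c : ℝ}
    (h₁ : θ x₁ ≤ s₁) (h₂ : θ x₂ ≤ s₂) (ha : 0 ≤ a) (hc : 0 ≤ c) (hac : a + c = 1) :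
    θ (a • x₁ + c • x₂) ≤ ((a * s₁ + c * s₂ : ℝ) : EReal) :=
  hθ (x := (x₁, s₁)) (y := (x₂, s₂)) h₁ h₂ ha hc hac

lemma ERealConvexOn.diffQuot_mono (hθ : ERealConvexOn θ) (hp : θ y = p) {t t' : ℝ} (ht : 0 < t)
    (htt' : t ≤ t') (u : E) : diffQuot θ y t u ≤ diffQuot θ y t' u := by
  have ht' := ht.trans_le htt'
  refine EReal.le_of_forall_lt_iff_le.1 fun r hr => (diffQuot_le_coe_iff hp ht u r).2 ?_
  have h := hθ.le_combo hp.le ((diffQuot_le_coe_iff hp ht' u r).1 hr.le)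
    (sub_nonneg.2 (div_le_one_of_le₀ htt' ht'.le)) (div_nonneg ht.le ht'.le) (sub_add_cancel _ _)
  convert h using 2
  · rw [smul_add, smul_smul, div_mul_cancel₀ _ ht'.ne', ← add_assoc, ← add_smul, sub_add_cancel,
      one_smul]
  · field_simp
    ring

lemma ERealConvexOn.radialSubDeriv_le_diffQuot (hθ : ERealConvexOn θ) (hp : θ y = p) {t : ℝ}
    (ht : 0 < t) (u : E) : radialSubDeriv θ y u ≤ diffQuot θ y t u :=
  liminf_le_of_frequently_le (Eventually.frequently <| by
    filter_upwards [Ioo_mem_nhdsGT ht] with s hs using hθ.diffQuot_mono hp hs.1 hs.2.le u)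

lemma ERealConvexOn.eventually_diffQuot_lt (hθ : ERealConvexOn θ) (hp : θ y = p) {u : E}
    {r : EReal} (h : radialSubDeriv θ y u < r) : ∀ᶠ t in 𝓝[>] 0, diffQuot θ y t u < r := by
  obtain ⟨t, hlt, ht⟩ :=
    ((frequently_lt_of_liminf_lt (by isBoundedDefault) h).and_eventually self_mem_nhdsWithin).exists
  filter_upwards [Ioo_mem_nhdsGT (show (0 : ℝ) < t from ht)] with s hs
  exact (hθ.diffQuot_mono hp hs.1 hs.2.le u).trans_lt hlt

lemma ERealConvexOn.convex_epiSet_radialSubDeriv (hθ : ERealConvexOn θ) (hp : θ y = p) :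
    Convex ℝ (epiSet (radialSubDeriv θ y)) := by
  rintro ⟨u₁, r₁⟩ h₁ ⟨u₂, r₂⟩ h₂ a c ha hc hac
  replace h₁ : radialSubDeriv θ y u₁ ≤ r₁ := h₁
  replace h₂ : radialSubDeriv θ y u₂ ≤ r₂ := h₂
  show radialSubDeriv θ y (a • u₁ + c • u₂) ≤ ((a * r₁ + c * r₂ : ℝ) : EReal)
  obtain rfl : c = 1 - a := by linarith
  refine EReal.le_of_forall_lt_iff_le.1 fun r hr => ?_
  obtain ⟨ε, hε, rfl⟩ : ∃ ε : ℝ, 0 < ε ∧ r = a * r₁ + (1 - a) * r₂ + ε :=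
    ⟨_, sub_pos.2 (EReal.coe_lt_coe_iff.1 hr), by ring⟩
  have ev : ∀ {u : E} {r' : ℝ}, radialSubDeriv θ y u ≤ r' →
      ∀ᶠ t in 𝓝[>] 0, diffQuot θ y t u < ((r' + ε : ℝ) : EReal) := fun h =>
    hθ.eventually_diffQuot_lt hp (h.trans_lt (EReal.coe_lt_coe_iff.2 (by linarith)))
  obtain ⟨t, ⟨ht₁, ht₂⟩, ht⟩ := ((ev h₁).and (ev h₂) |>.and self_mem_nhdsWithin).exists
  have ht : (0 : ℝ) < t := ht
  refine (hθ.radialSubDeriv_le_diffQuot hp ht _).trans ((diffQuot_le_coe_iff hp ht _ _).2 ?_)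
  have h := hθ.le_combo ((diffQuot_le_coe_iff hp ht u₁ _).1 ht₁.le)
    ((diffQuot_le_coe_iff hp ht u₂ _).1 ht₂.le) ha hc hac
  convert h using 2
  · module
  · ring

lemma coe_le_subDeriv_of_mem_convSubdiff (hp : θ y = p) {l : E →L[ℝ] ℝ}
    (hl : l ∈ convSubdiff θ y) (u : E) : (l u : EReal) ≤ subDeriv θ y u := by
  have hlim : Tendsto (fun q : ℝ × E => ((l q.2 : ℝ) : EReal)) (𝓝[>] 0 ×ˢ 𝓝 u) (𝓝 (l u)) :=
    ((continuous_coe_real_ereal.comp (l.continuous.comp continuous_snd)).tendsto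
      ((0 : ℝ), u)).mono_left (nhdsGT_prod_le_nhds u)
  rw [← hlim.liminf_eq]
  refine liminf_le_liminf ?_
  filter_upwards [Eventually.prod_inl self_mem_nhdsWithin _] with q (hq : 0 < q.1)
  rw [coe_le_diffQuot_iff hp hq]
  simpa [hp] using hl (y + q.1 • q.2)

lemma ERealConvexOn.convSubdiff_eq_linMinorants (hθ : ERealConvexOn θ) (hp : θ y = p) :
    convSubdiff θ y = linMinorants (subDeriv θ y) := by
  refine Set.Subset.antisymm (fun l hl => coe_le_subDeriv_of_mem_convSubdiff hp hl) fun l hl z => ?_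
  have h := (hl (z - y)).trans ((subDeriv_le_radialSubDeriv θ y _).trans
    (hθ.radialSubDeriv_le_diffQuot hp one_pos _))
  rw [coe_le_diffQuot_iff hp one_pos] at h
  simpa [hp] using h

end Convex

structure IsClosedSublinear (h : E → EReal) : Prop where
  map_zero : h 0 = 0
  add_mem : ∀ q₁ ∈ epiSet h, ∀ q₂ ∈ epiSet h, q₁ + q₂ ∈ epiSet h
  smul_mem : ∀ q ∈ epiSet h, ∀ m : ℝ, 0 < m → m • q ∈ epiSet h
  isClosed : IsClosed (epiSet h)

namespace IsClosedSublinear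

variable {h : E → EReal}

lemma mem_epiSet_zero (hh : IsClosedSublinear h) {r : ℝ} (hr : 0 ≤ r) : ((0 : E), r) ∈ epiSet h :=
  show h 0 ≤ r by simpa [hh.map_zero] using hr

def epiCone (hh : IsClosedSublinear h) : ProperCone ℝ (E × ℝ) where
  carrier := epiSet h
  add_mem' ha hb := hh.add_mem _ ha _ hb
  zero_mem' := hh.mem_epiSet_zero le_rfl
  smul_mem' := by
    rintro ⟨m, hm⟩ q hq
    rcases hm.eq_or_lt with rfl | hm
    · simpa [Prod.zero_eq_mk] using hh.mem_epiSet_zero le_rfl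
    · exact hh.smul_mem q hq m hm
  isClosed' := hh.isClosed

/-- Farkas' lemma for the epigraph cone, with the functional split as `(u, r) ↦ -g u + γ r`. -/
lemma exists_separation (hh : IsClosedSublinear h) {z : E} {c : ℝ} (hc : (c : EReal) < h z) :
    ∃ (g : E →L[ℝ] ℝ) (γ : ℝ), 0 ≤ γ ∧ (∀ q ∈ epiSet h, g q.1 ≤ γ * q.2) ∧ γ * c < g z := by
  have hz : (z, c) ∉ hh.epiCone := fun hmem => not_le.2 hc (show h z ≤ c from hmem)
  obtain ⟨f, hf, hfz⟩ := hh.epiCone.hyperplane_separation_point hz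
  have hsplit : ∀ q : E × ℝ, f q = f (q.1, 0) + q.2 * f (0, 1) := fun q => by
    rw [← smul_eq_mul, ← map_smul, ← map_add]
    simp
  refine ⟨-f.comp (ContinuousLinearMap.inl ℝ E ℝ), f (0, 1), hf _ (hh.mem_epiSet_zero zero_le_one),
    fun q hq => ?_, ?_⟩
  · have := hf q hq
    rw [hsplit] at this
    simp only [neg_apply, ContinuousLinearMap.comp_apply, ContinuousLinearMap.inl_apply]
    linarith
  · rw [hsplit] at hfz
    simp only [neg_apply, ContinuousLinearMap.comp_apply, ContinuousLinearMap.inl_apply]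
    linarith

lemma exists_mem_linMinorants_lt (hh : IsClosedSublinear h) {z : E} {c : ℝ}
    (hc : (c : EReal) < h z) : ∃ l ∈ linMinorants h, c < l z := by
  obtain ⟨g, γ, hγ, hg, hgz⟩ := hh.exists_separation hc
  rcases hγ.lt_or_eq with hγ | rfl
  · refine ⟨γ⁻¹ • g, inv_smul_mem_linMinorants hγ hg, ?_⟩
    simpa [lt_inv_mul_iff₀ hγ, mul_comm] using hgz
  -- a vertical separating hyperplane: add a large multiple of `g` to some minorant
  obtain ⟨g₀, γ₀, -, hg₀, hg₀z⟩ :=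
    hh.exists_separation (z := 0) (c := -1) (by simp [hh.map_zero])
  have hγ₀ : 0 < γ₀ := by simpa using hg₀z
  have hl₀ := inv_smul_mem_linMinorants hγ₀ hg₀
  set l₀ := γ₀⁻¹ • g₀
  have hgz : 0 < g z := by simpa using hgz
  obtain ⟨n, hn⟩ := exists_nat_gt ((c - l₀ z) / g z)
  refine ⟨l₀ + (n : ℝ) • g, mem_linMinorants_iff.2 fun q hq => ?_, ?_⟩
  · have e₀ := mem_linMinorants_iff.1 hl₀ q hq
    have e := hg q hq
    simp only [add_apply, smul_apply, smul_eq_mul]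
    nlinarith [n.cast_nonneg (α := ℝ)]
  · rw [div_lt_iff₀ hgz] at hn
    simp only [add_apply, smul_apply, smul_eq_mul]
    linarith

lemma le_of_forall_mem_linMinorants (hh : IsClosedSublinear h) {z : E} {c : ℝ}
    (hz : ∀ l ∈ linMinorants h, l z ≤ c) : h z ≤ c := by
  by_contra! hc
  obtain ⟨l, hl, hlz⟩ := hh.exists_mem_linMinorants_lt hc
  exact (hz l hl).not_gt hlz

end IsClosedSublinear

instance WeakDual.instLocallyConvexSpace {X : Type*} [NormedAddCommGroup X] [NormedSpace ℝ X] :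
    LocallyConvexSpace ℝ (WeakDual ℝ X) :=
  WeakBilin.locallyConvexSpace

lemma WeakDual.exists_eq_eval {X : Type*} [NormedAddCommGroup X] [NormedSpace ℝ X]
    (F : StrongDual ℝ (WeakDual ℝ X)) : ∃ w : X, ∀ l : X →L[ℝ] ℝ, F l = l w := by
  obtain ⟨w, hw⟩ := LinearMap.dualEmbedding_surjective (topDualPairing ℝ X) F
  exact ⟨w, fun l => by rw [← hw]; rfl⟩

theorem IsClosedSublinear.linMinorants_comp_eq_image {X : Type*} [NormedAddCommGroup X]
    [NormedSpace ℝ X] {h : E → EReal} (hh : IsClosedSublinear h) (A : X →L[ℝ] E)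
    (hA : IsWeakStarClosed ((fun l : E →L[ℝ] ℝ => l.comp A) '' linMinorants h)) :
    linMinorants (fun w => h (A w)) = (fun l : E →L[ℝ] ℝ => l.comp A) '' linMinorants h := by
  refine Set.Subset.antisymm (fun v hv => ?_) (by rintro _ ⟨l, hl, rfl⟩ w; exact hl (A w))
  by_contra hvS
  have hconv : Convex ℝ (show Set (WeakDual ℝ X) from
      (fun l : E →L[ℝ] ℝ => l.comp A) '' linMinorants h) :=
    (convex_linMinorants h).linear_image ((ContinuousLinearMap.compL ℝ X E ℝ).flip A).toLinearMap
  obtain ⟨F, c, hFS, hFv⟩ := geometric_hahn_banach_closed_point hconv hA hvS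
  obtain ⟨w, hw⟩ := WeakDual.exists_eq_eval F
  have hAw : h (A w) ≤ c := hh.le_of_forall_mem_linMinorants fun l hl =>
    (by simpa [hw] using hFS _ ⟨l, hl, rfl⟩ : l (A w) < c).le
  rw [hw] at hFv
  exact (EReal.coe_lt_coe_iff.2 hFv).not_ge ((hv w).trans hAw)

namespace PiecewiseLQData

variable {θ : E → EReal} (R : PiecewiseLQData θ)

lemma deriv_le_coe_iff {y u : E} {r : ℝ} :
    R.deriv y u ≤ r ↔ ∃ i, u ∈ feasibleDirections (R.Ω i) y ∧ 2 * R.B i y u + R.b i u ≤ r := by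
  refine ⟨fun h => ?_, fun ⟨i, hi, hr⟩ => (R.deriv_le hi).trans (EReal.coe_le_coe_iff.2 hr)⟩
  rcases (((fun i => ((2 * R.B i y u + R.b i u : ℝ) : EReal)) ''
    {i | u ∈ feasibleDirections (R.Ω i) y})).eq_empty_or_nonempty with hS | hS
  · rw [deriv, hS, sInf_empty, top_le_iff] at h
    exact absurd h (EReal.coe_ne_top r)
  · obtain ⟨i, hi, hmin⟩ := hS.csInf_mem (Set.toFinite _)
    exact ⟨i, hi, EReal.coe_le_coe_iff.1 (hmin.trans_le h)⟩

lemma epiSet_deriv (y : E) :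
    epiSet (R.deriv y) =
      ⋃ i, {q | q.1 ∈ feasibleDirections (R.Ω i) y ∧ 2 * R.B i y q.1 + R.b i q.1 ≤ q.2} := by
  ext q
  simp only [epiSet, mem_ofPred_eq, mem_iUnion, R.deriv_le_coe_iff]

lemma isClosed_epiSet_deriv (y : E) : IsClosed (epiSet (R.deriv y)) := by
  rw [R.epiSet_deriv]
  exact isClosed_iUnion_of_finite fun i =>
    (((R.isPolyhedral i).isClosed_feasibleDirections y).preimage continuous_fst).inter
      (isClosed_le (by fun_prop) continuous_snd)

lemma smul_mem_epiSet_deriv {y : E} {q : E × ℝ} (hq : q ∈ epiSet (R.deriv y)) {m : ℝ}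
    (hm : 0 < m) : m • q ∈ epiSet (R.deriv y) := by
  rw [R.epiSet_deriv, mem_iUnion] at hq ⊢
  obtain ⟨i, hi, hle⟩ := hq
  refine ⟨i, smul_mem_feasibleDirections hi hm, ?_⟩
  simp only [Prod.smul_fst, Prod.smul_snd, map_smul, smul_eq_mul]
  nlinarith

lemma deriv_zero {i : Fin R.s} {y : E} (hy : y ∈ R.Ω i) : R.deriv y 0 = 0 := by
  have h0 : (0 : E) ∈ feasibleDirections (R.Ω i) y :=
    Eventually.of_forall (f := 𝓝[>] (0 : ℝ)) fun t => by simpa using hy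
  refine le_antisymm ((R.deriv_le h0).trans_eq (by simp)) (le_sInf ?_)
  rintro _ ⟨j, -, rfl⟩
  simp

end PiecewiseLQData

lemma PiecewiseLQ.isClosedSublinear_subDeriv {θ : E → EReal} (hθ : PiecewiseLQ θ)
    (hconv : ERealConvexOn θ) {y : E} (hy : θ y ≠ ⊤) : IsClosedSublinear (subDeriv θ y) := by
  obtain ⟨R⟩ := hθ.nonempty_data
  obtain ⟨i, hi⟩ := R.exists_mem_of_ne_top hy
  have hderiv : subDeriv θ y = R.deriv y := funext (R.subDeriv_eq_deriv hy)
  have hconvex : Convex ℝ (epiSet (subDeriv θ y)) := by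
    rw [funext (hθ.subDeriv_eq_radialSubDeriv hy)]
    exact hconv.convex_epiSet_radialSubDeriv (EReal.coe_toReal hy (hθ.ne_bot y)).symm
  rw [hderiv] at hconvex ⊢
  refine ⟨R.deriv_zero hi, fun q₁ h₁ q₂ h₂ => ?_, fun q hq m hm => R.smul_mem_epiSet_deriv hq hm,
    R.isClosed_epiSet_deriv y⟩
  -- `q₁ + q₂` is twice the midpoint of `q₁` and `q₂`
  convert R.smul_mem_epiSet_deriv (hconvex h₁ h₂ one_half_pos.le one_half_pos.le (add_halves 1))
    two_pos using 1
  module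

theorem chain_rules_plq_affine_general
    {X Y : Type*} [NormedAddCommGroup X] [NormedSpace ℝ X]
    [NormedAddCommGroup Y] [NormedSpace ℝ Y]
    (A : X →L[ℝ] Y) (a : Y) (θ : Y → EReal)
    (hθ : PiecewiseLQ θ) :
    (∀ x : X, θ (A x + a) ≠ ⊤ → ∀ w : X,
      subDeriv (fun x' => θ (A x' + a)) x w = subDeriv θ (A x + a) (A w)) ∧
    (ERealConvexOn θ →
      ∀ x : X, θ (A x + a) ≠ ⊤ →
        IsWeakStarClosed ((fun l : Y →L[ℝ] ℝ => l.comp A) '' convSubdiff θ (A x + a)) →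
        subDiff (fun x' => θ (A x' + a)) x =
          (fun l : Y →L[ℝ] ℝ => l.comp A) '' convSubdiff θ (A x + a)) := by
  refine ⟨fun x hx w => hθ.subDeriv_comp_affine A a hx w, fun hconv x hx hclosed => ?_⟩
  have hp : θ (A x + a) = (θ (A x + a)).toReal := (EReal.coe_toReal hx (hθ.ne_bot _)).symm
  have hφ : subDiff (fun x' => θ (A x' + a)) x =
      linMinorants (fun w => subDeriv θ (A x + a) (A w)) := by
    simp only [subDiff, linMinorants, hθ.subDeriv_comp_affine A a hx]
  rw [hconv.convSubdiff_eq_linMinorants hp] at hclosed ⊢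
  rw [hφ]
  exact (hθ.isClosedSublinear_subDeriv hconv hx).linMinorants_comp_eq_image A hclosed

/-- unconditional chain rules for compositions of piecewise
linear-quadratic functions with affine mappings. -/
theorem chain_rules_plq_affine
    {X Y : Type*} [NormedAddCommGroup X] [NormedSpace ℝ X]
    [NormedAddCommGroup Y] [NormedSpace ℝ Y]
    (A : X →L[ℝ] Y) (a : Y) (θ : Y → EReal)
    (hθbot : ∀ y, θ y ≠ ⊥)
    (hθ : PiecewiseLQ θ) :
    (∀ x : X, θ (A x + a) ≠ ⊤ → ∀ w : X,
      subDeriv (fun x' => θ (A x' + a)) x w = subDeriv θ (A x + a) (A w)) ∧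
    (ERealConvexOn θ →
      ∀ x : X, θ (A x + a) ≠ ⊤ →
        IsWeakStarClosed ((fun l : Y →L[ℝ] ℝ => l.comp A) '' convSubdiff θ (A x + a)) →
        subDiff (fun x' => θ (A x' + a)) x =
          (fun l : Y →L[ℝ] ℝ => l.comp A) '' convSubdiff θ (A x + a)) :=
  chain_rules_plq_affine_general A a θ hθ
end
end
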